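/- Let G be a real (n+1) × l₊ matrix with columns G_1, …, G_{l₊} and H a real (n+1) × l₋ matrix with columns H_1, …, H_{l₋}, let C₁ > 0, C₂ > 0, λ > 0 and a ∈ ℝ. Then the Wave-TSVM objective P₁(w) = (1/2)·‖Gᵀw‖² + (C₁/2)·‖w‖² + C₂·Σ_{j=1}^{l₋} L_{a,λ}(1 + H_jᵀw) on ℝ^{n+1} is differentiable everywhere with gradient ∇P₁(w) = (G·Gᵀ + C₁·I)·w + C₂·Σ_{j=1}^{l₋} s_{1j}(w)·H_j, where s_{1j}(w) = A_j·(a·A_j + 2)·e^{a·A_j} / (1 + λ·A_j²·e^{a·A_j})² and A_j = 1 + H_jᵀw. Consequently, every local minimizer w of P₁ satisfies w = −(G·Gᵀ + C₁·I)^{-1} · (C₂·Σ_{j=1}^{l₋} s_{1j}(w)·H_j), the matrix G·Gᵀ + C₁·I being invertible since C₁ > 0. -/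

import Mathlib

/-! The objective is a sum of two quadratic forms, with gradients `G Gᵀ w` and `C₁ w`, and of
the wave losses of the affine functions `w ↦ 1 + H_jᵀ w`; by the chain rule the latter contribute
`waveFactor (1 + H_jᵀ w) • H_j`, since `waveFactor` is the derivative of `waveLoss` (its denominator
`1 + λ u² e^{au}` is positive for `λ > 0`). At a local minimum the gradient vanishes, and
`G Gᵀ + C₁ I` is positive definite, hence invertible, which yields the fixed-point formula for `w`. -/

open Matrix

noncomputable def waveLoss (a lam u : ℝ) : ℝ :=
  (1 / lam) * (1 - 1 / (1 + lam * u ^ 2 * Real.exp (a * u)))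

/-- The wave-loss penalty factor `s_{1j}(w)` appearing in the Wave-TSVM gradient,
where `A = 1 + H_jᵀ w`. -/
noncomputable def waveFactor (a lam A : ℝ) : ℝ :=
  A * (a * A + 2) * Real.exp (a * A) / (1 + lam * A ^ 2 * Real.exp (a * A)) ^ 2

open InnerProductSpace
open scoped RealInnerProductSpace

section Gradient

variable {F : Type*} [NormedAddCommGroup F] [InnerProductSpace ℝ F] [CompleteSpace F]
  {f g : F → ℝ} {f' g' x : F}

theorem HasGradientAt.add (hf : HasGradientAt f f' x) (hg : HasGradientAt g g' x) :
    HasGradientAt (fun y => f y + g y) (f' + g') x := by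
  rw [hasGradientAt_iff_hasFDerivAt, map_add]
  exact hf.hasFDerivAt.add hg.hasFDerivAt

theorem HasGradientAt.const_mul (c : ℝ) (hf : HasGradientAt f f' x) :
    HasGradientAt (fun y => c * f y) (c • f') x := by
  rw [hasGradientAt_iff_hasFDerivAt, map_smulₛₗ, conj_trivial]
  exact hf.hasFDerivAt.const_mul c

theorem HasGradientAt.sum {ι : Type*} {s : Finset ι} {f : ι → F → ℝ} {f' : ι → F}
    (hf : ∀ i ∈ s, HasGradientAt (f i) (f' i) x) :
    HasGradientAt (fun y => ∑ i ∈ s, f i y) (∑ i ∈ s, f' i) x := by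
  rw [hasGradientAt_iff_hasFDerivAt, map_sum]
  exact HasFDerivAt.fun_sum fun i hi => (hf i hi).hasFDerivAt

theorem HasDerivAt.comp_hasGradientAt {h : ℝ → ℝ} {h' : ℝ} (hh : HasDerivAt h h' (f x))
    (hf : HasGradientAt f f' x) : HasGradientAt (fun y => h (f y)) (h' • f') x := by
  rw [hasGradientAt_iff_hasFDerivAt, map_smulₛₗ, conj_trivial]
  exact hh.comp_hasFDerivAt x hf.hasFDerivAt

theorem hasGradientAt_inner_right (c x : F) : HasGradientAt (fun y => ⟪c, y⟫) c x := by
  rw [hasGradientAt_iff_hasFDerivAt]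
  exact (innerSL ℝ c).hasFDerivAt

theorem hasGradientAt_norm_sq (x : F) : HasGradientAt (fun y => ‖y‖ ^ 2) ((2 : ℝ) • x) x := by
  rw [hasGradientAt_iff_hasFDerivAt]
  refine (hasStrictFDerivAt_norm_sq x).hasFDerivAt.congr_fderiv ?_
  ext y
  simp [two_mul]

theorem IsLocalMin.hasGradientAt_eq_zero (h : IsLocalMin f x) (hf : HasGradientAt f f' x) :
    f' = 0 :=
  (toDual ℝ F).map_eq_zero_iff.mp (h.hasFDerivAt_eq_zero hf.hasFDerivAt)

end Gradient

section Euclidean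

variable {ι κ : Type*} [Fintype ι]

theorem EuclideanSpace.hasGradientAt_mulVec_apply (A : Matrix κ ι ℝ) (i : κ)
    (x : EuclideanSpace ℝ ι) :
    HasGradientAt (fun v : EuclideanSpace ℝ ι => (A *ᵥ v.ofLp) i) (WithLp.toLp 2 (A i)) x := by
  convert hasGradientAt_inner_right (WithLp.toLp 2 (A i)) x using 2 with v
  simp [PiLp.inner_apply, mulVec, dotProduct, mul_comm]

theorem EuclideanSpace.hasGradientAt_sum_sq_mulVec [Fintype κ] (A : Matrix κ ι ℝ)
    (x : EuclideanSpace ℝ ι) :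
    HasGradientAt (fun v : EuclideanSpace ℝ ι => ∑ i, (A *ᵥ v.ofLp) i ^ 2)
      (WithLp.toLp 2 ((2 : ℝ) • (Aᵀ *ᵥ (A *ᵥ x.ofLp)))) x := by
  convert HasGradientAt.sum (s := Finset.univ) fun i _ =>
    (hasDerivAt_pow 2 ((A *ᵥ x.ofLp) i)).comp_hasGradientAt
      (f := fun v : EuclideanSpace ℝ ι => (A *ᵥ v.ofLp) i) (hasGradientAt_mulVec_apply A i x)
    using 1
  rw [mulVec_transpose, vecMul_eq_sum]
  simp [Finset.smul_sum, smul_smul]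

end Euclidean

theorem Matrix.PosDef.mul_transpose_add_smul_one {m k : Type*} [Fintype m] [Fintype k]
    [DecidableEq m] (G : Matrix m k ℝ) {c : ℝ} (hc : 0 < c) : (G * Gᵀ + c • 1).PosDef := by
  have hG : (G * Gᵀ).PosSemidef := by
    rw [← conjTranspose_eq_transpose_of_trivial]
    exact posSemidef_self_mul_conjTranspose G
  exact PosDef.posSemidef_add hG (PosDef.one.smul hc)

theorem Matrix.eq_neg_inv_mulVec_of_mulVec_add_eq_zero {n α : Type*} [Fintype n] [DecidableEq n]
    [CommRing α] {M : Matrix n n α} (hM : IsUnit M) {x b : n → α} (h : M *ᵥ x + b = 0) :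
    x = -(M⁻¹ *ᵥ b) := by
  rw [eq_neg_of_add_eq_zero_right h, mulVec_neg, neg_neg, mulVec_mulVec,
    nonsing_inv_mul _ ((isUnit_iff_isUnit_det M).mp hM), one_mulVec]

theorem hasDerivAt_waveLoss {lam : ℝ} (hlam : 0 < lam) (a u : ℝ) :
    HasDerivAt (waveLoss a lam) (waveFactor a lam u) u := by
  have hden : 0 < 1 + lam * u ^ 2 * Real.exp (a * u) := by positivity
  have hden' : HasDerivAt (fun x => 1 + lam * x ^ 2 * Real.exp (a * x))
      (lam * (u * (a * u + 2) * Real.exp (a * u))) u := by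
    refine ((((hasDerivAt_pow 2 u).const_mul lam).fun_mul
      ((hasDerivAt_id' u).const_mul a).exp).const_add 1).congr_deriv ?_
    push_cast
    ring
  refine ((((hasDerivAt_const u (1 : ℝ)).div hden' hden.ne').const_sub 1).const_mul
    (1 / lam)).congr_deriv ?_
  unfold waveFactor
  field_simp
  ring

section WaveTSVM

variable {ι κ μ : Type*} [Fintype ι] [Fintype κ] [Fintype μ]
  (G : Matrix ι κ ℝ) (H : Matrix ι μ ℝ)

noncomputable def waveTSVMObjective (C₁ C₂ lam a : ℝ) (v : EuclideanSpace ℝ ι) : ℝ :=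
  (1 / 2) * ∑ i, (Gᵀ *ᵥ v.ofLp) i ^ 2 + (C₁ / 2) * ‖v‖ ^ 2 +
    C₂ * ∑ j, waveLoss a lam (1 + (Hᵀ *ᵥ v.ofLp) j)

variable [DecidableEq ι] {C₁ C₂ lam a : ℝ}

theorem hasGradientAt_waveTSVMObjective (hlam : 0 < lam) (w : EuclideanSpace ℝ ι) :
    HasGradientAt (waveTSVMObjective G H C₁ C₂ lam a)
      (WithLp.toLp 2 ((G * Gᵀ + C₁ • 1) *ᵥ w.ofLp +
        C₂ • ∑ j, waveFactor a lam (1 + (Hᵀ *ᵥ w.ofLp) j) • Hᵀ j)) w := by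
  have hquad := (EuclideanSpace.hasGradientAt_sum_sq_mulVec Gᵀ w).const_mul (1 / 2)
  have hnorm := (hasGradientAt_norm_sq w).const_mul (C₁ / 2)
  have hloss := (HasGradientAt.sum (s := Finset.univ) fun j _ =>
    ((hasDerivAt_waveLoss hlam a _).comp_const_add 1 _).comp_hasGradientAt
      (EuclideanSpace.hasGradientAt_mulVec_apply Hᵀ j w)).const_mul C₂
  unfold waveTSVMObjective
  convert (hquad.add hnorm).add hloss using 1
  rw [transpose_transpose, add_mulVec, ← mulVec_mulVec, smul_mulVec, one_mulVec]
  simp only [WithLp.toLp_add, WithLp.toLp_smul, WithLp.toLp_sum, WithLp.toLp_ofLp, smul_smul]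
  norm_num

theorem ofLp_eq_of_isLocalMin_waveTSVMObjective (hC₁ : 0 < C₁) (hlam : 0 < lam)
    {w : EuclideanSpace ℝ ι} (hw : IsLocalMin (waveTSVMObjective G H C₁ C₂ lam a) w) :
    w.ofLp = -((G * Gᵀ + C₁ • 1)⁻¹ *ᵥ
      (C₂ • ∑ j, waveFactor a lam (1 + (Hᵀ *ᵥ w.ofLp) j) • Hᵀ j)) :=
  eq_neg_inv_mulVec_of_mulVec_add_eq_zero (PosDef.mul_transpose_add_smul_one G hC₁).isUnit <|
    (WithLp.toLp_eq_zero 2).mp <|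
      hw.hasGradientAt_eq_zero (hasGradientAt_waveTSVMObjective G H hlam w)

end WaveTSVM

theorem waveTSVM_objective_gradient_and_stationarity_general (n lp lm : ℕ)
    (G : Matrix (Fin (n + 1)) (Fin lp) ℝ) (H : Matrix (Fin (n + 1)) (Fin lm) ℝ)
    (C₁ C₂ lam a : ℝ) (hC₁ : 0 < C₁) (hlam : 0 < lam) :
    (∀ w : EuclideanSpace ℝ (Fin (n + 1)),
      HasGradientAt
        (fun v : EuclideanSpace ℝ (Fin (n + 1)) =>
          (1 / 2) * ∑ i, (Gᵀ.mulVec ((EuclideanSpace.equiv (Fin (n + 1)) ℝ) v) i) ^ 2 +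
            (C₁ / 2) * ‖v‖ ^ 2 +
            C₂ * ∑ j, waveLoss a lam
              (1 + ∑ k, H k j * (EuclideanSpace.equiv (Fin (n + 1)) ℝ) v k))
        ((EuclideanSpace.equiv (Fin (n + 1)) ℝ).symm
          ((G * Gᵀ + C₁ • (1 : Matrix (Fin (n + 1)) (Fin (n + 1)) ℝ)).mulVec
              ((EuclideanSpace.equiv (Fin (n + 1)) ℝ) w) +
            C₂ • ∑ j, waveFactor a lam
                (1 + ∑ k, H k j * (EuclideanSpace.equiv (Fin (n + 1)) ℝ) w k) •
              (fun k => H k j)))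
        w) ∧
    IsUnit (G * Gᵀ + C₁ • (1 : Matrix (Fin (n + 1)) (Fin (n + 1)) ℝ)) ∧
    ∀ w : EuclideanSpace ℝ (Fin (n + 1)),
      IsLocalMin
        (fun v : EuclideanSpace ℝ (Fin (n + 1)) =>
          (1 / 2) * ∑ i, (Gᵀ.mulVec ((EuclideanSpace.equiv (Fin (n + 1)) ℝ) v) i) ^ 2 +
            (C₁ / 2) * ‖v‖ ^ 2 +
            C₂ * ∑ j, waveLoss a lam
              (1 + ∑ k, H k j * (EuclideanSpace.equiv (Fin (n + 1)) ℝ) v k)) w →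
      (EuclideanSpace.equiv (Fin (n + 1)) ℝ) w =
        -(G * Gᵀ + C₁ • (1 : Matrix (Fin (n + 1)) (Fin (n + 1)) ℝ))⁻¹.mulVec
          (C₂ • ∑ j, waveFactor a lam
              (1 + ∑ k, H k j * (EuclideanSpace.equiv (Fin (n + 1)) ℝ) w k) •
            (fun k => H k j)) :=
  ⟨hasGradientAt_waveTSVMObjective G H hlam,
    (PosDef.mul_transpose_add_smul_one G hC₁).isUnit,
    fun _ => ofLp_eq_of_isLocalMin_waveTSVMObjective G H hC₁ hlam⟩

theorem waveTSVM_objective_gradient_and_stationarity (n lp lm : ℕ)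
    (G : Matrix (Fin (n + 1)) (Fin lp) ℝ) (H : Matrix (Fin (n + 1)) (Fin lm) ℝ)
    (C₁ C₂ lam a : ℝ) (hC₁ : 0 < C₁) (hC₂ : 0 < C₂) (hlam : 0 < lam) :
    (∀ w : EuclideanSpace ℝ (Fin (n + 1)),
      HasGradientAt
        (fun v : EuclideanSpace ℝ (Fin (n + 1)) =>
          (1 / 2) * ∑ i, (Gᵀ.mulVec ((EuclideanSpace.equiv (Fin (n + 1)) ℝ) v) i) ^ 2 +
            (C₁ / 2) * ‖v‖ ^ 2 +
            C₂ * ∑ j, waveLoss a lam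
              (1 + ∑ k, H k j * (EuclideanSpace.equiv (Fin (n + 1)) ℝ) v k))
        ((EuclideanSpace.equiv (Fin (n + 1)) ℝ).symm
          ((G * Gᵀ + C₁ • (1 : Matrix (Fin (n + 1)) (Fin (n + 1)) ℝ)).mulVec
              ((EuclideanSpace.equiv (Fin (n + 1)) ℝ) w) +
            C₂ • ∑ j, waveFactor a lam
                (1 + ∑ k, H k j * (EuclideanSpace.equiv (Fin (n + 1)) ℝ) w k) •
              (fun k => H k j)))
        w) ∧
    IsUnit (G * Gᵀ + C₁ • (1 : Matrix (Fin (n + 1)) (Fin (n + 1)) ℝ)) ∧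
    ∀ w : EuclideanSpace ℝ (Fin (n + 1)),
      IsLocalMin
        (fun v : EuclideanSpace ℝ (Fin (n + 1)) =>
          (1 / 2) * ∑ i, (Gᵀ.mulVec ((EuclideanSpace.equiv (Fin (n + 1)) ℝ) v) i) ^ 2 +
            (C₁ / 2) * ‖v‖ ^ 2 +
            C₂ * ∑ j, waveLoss a lam
              (1 + ∑ k, H k j * (EuclideanSpace.equiv (Fin (n + 1)) ℝ) v k)) w →
      (EuclideanSpace.equiv (Fin (n + 1)) ℝ) w =
        -(G * Gᵀ + C₁ • (1 : Matrix (Fin (n + 1)) (Fin (n + 1)) ℝ))⁻¹.mulVec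
          (C₂ • ∑ j, waveFactor a lam
              (1 + ∑ k, H k j * (EuclideanSpace.equiv (Fin (n + 1)) ℝ) w k) •
            (fun k => H k j)) :=
  waveTSVM_objective_gradient_and_stationarity_general n lp lm G H C₁ C₂ lam a hC₁ hlam
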